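/- arXiv:1712.08768 — 2 statements merged into one kernel-verified Lean document; each statement's English description precedes it below -/
import Mathlib

section
/- (Theorem 2.) Let M ≥ 1 and let B_1, …, B_M > 0 be the radio bandwidths to the M MEC devices, with i* an index achieving the maximum bandwidth B_{i*} = max_{1 ≤ i ≤ M} B_i. Fix reals C > 0, N > 0, f > 0, ς > 0, P ≥ 0, β ≥ 0, μ ≥ 0, ψ ≥ 0, b ∈ ℝ, ρ ∈ ℝ. Suppose B_{i*}·(f + β·ς·N·f³ + μ·N) ≤ β·P·f and suppose the battery suffices for purely local computing: b − ς·C·N·f² + ρ > 0. Then processing the entire task locally is optimal: for every index i ∈ {1,…,M} and every x ∈ [0,1], Û_{B_i}(x) ≤ Û_{B_i}(0), and the optimal utility equals Û_{B_i}(0) = −C·N·(β·ς·f² + μ/f). -/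
noncomputable def U (C N f ς P β μ B x : ℝ) : ℝ :=
  x * C - β * (ς * C * N * f ^ 2 * (1 - x) + P * x * C / B) -
    μ * max ((1 - x) * C * N / f) (x * C / B)

noncomputable def Uhat (C N f ς P β μ ψ b ρ B x : ℝ) : ℝ :=
  U C N f ς P β μ B x -
    ψ * (if b - (ς * C * N * f ^ 2 * (1 - x) + P * x * C / B) + ρ ≤ 0 then 1 else 0)

/-! Offloading a fraction `x` changes the utility by at most `x` times
`C + β ς C N f² + μ C N / f - β P C / B` (the gain `x C`, the saved local energy, and the local
delay, which bounds the `max` from below, against the transmission energy). The bandwidth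
condition makes this coefficient nonpositive, and it passes from `B_{i*}` to every `B_i ≤ B_{i*}`
because `f + β ς N f³ + μ N ≥ 0`. The battery hypothesis says exactly that local computing
incurs no drop penalty, while the penalty can only lower the utility elsewhere. -/

section Utility

variable {C N f ς P β μ ψ b ρ B : ℝ}

theorem U_zero (hC : 0 ≤ C) (hN : 0 ≤ N) (hf : 0 ≤ f) :
    U C N f ς P β μ B 0 = -(C * N * (β * ς * f ^ 2 + μ / f)) := by
  have hmax : max ((1 - 0) * C * N / f) (0 * C / B) = C * N / f := by
    rw [sub_zero, one_mul, zero_mul, zero_div, max_eq_left (by positivity)]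
  rw [U, hmax]
  ring

theorem Uhat_zero_eq_U_zero (hbatt : 0 < b - ς * C * N * f ^ 2 + ρ) :
    Uhat C N f ς P β μ ψ b ρ B 0 = U C N f ς P β μ B 0 := by
  have hnodrop : ¬ b - (ς * C * N * f ^ 2 * (1 - 0) + P * 0 * C / B) + ρ ≤ 0 := by
    simp only [sub_zero, mul_one, mul_zero, zero_mul, zero_div, add_zero]
    linarith
  rw [Uhat, if_neg hnodrop, mul_zero, sub_zero]

theorem Uhat_le_U (hψ : 0 ≤ ψ) (x : ℝ) :
    Uhat C N f ς P β μ ψ b ρ B x ≤ U C N f ς P β μ B x := by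
  rw [Uhat, sub_le_self_iff]
  positivity

theorem offload_coeff_le_of_bandwidth_le (hB : 0 < B) (hf : 0 < f) (hC : 0 ≤ C)
    (hcond : B * (f + β * ς * N * f ^ 3 + μ * N) ≤ β * P * f) :
    C + β * ς * C * N * f ^ 2 + μ * C * N / f ≤ β * P * C / B := by
  rw [le_div_iff₀ hB]
  calc (C + β * ς * C * N * f ^ 2 + μ * C * N / f) * B
      = C / f * (B * (f + β * ς * N * f ^ 3 + μ * N)) := by field_simp
    _ ≤ C / f * (β * P * f) := by gcongr
    _ = β * P * C := by field_simp

theorem U_le_U_zero (hC : 0 ≤ C) (hN : 0 ≤ N) (hf : 0 ≤ f) (hμ : 0 ≤ μ) {x : ℝ} (hx : 0 ≤ x)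
    (hcoeff : C + β * ς * C * N * f ^ 2 + μ * C * N / f ≤ β * P * C / B) :
    U C N f ς P β μ B x ≤ U C N f ς P β μ B 0 := by
  have hdelay : μ * ((1 - x) * C * N / f) ≤ μ * max ((1 - x) * C * N / f) (x * C / B) := by
    gcongr
    exact le_max_left _ _
  have hgain := mul_le_mul_of_nonneg_left hcoeff hx
  rw [U_zero hC hN hf, U]
  ring_nf at hgain hdelay ⊢
  linarith

end Utility

theorem stmt_13_general (M : ℕ) (B : Fin M → ℝ) (hBpos : ∀ i, 0 < B i)
    (istar : Fin M) (hmax : ∀ i, B i ≤ B istar)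
    (C N f ς P β μ ψ b ρ : ℝ) (hC : 0 < C) (hN : 0 < N) (hf : 0 < f)
    (hς : 0 < ς) (hβ : 0 ≤ β) (hμ : 0 ≤ μ) (hψ : 0 ≤ ψ)
    (hcond : B istar * (f + β * ς * N * f ^ 3 + μ * N) ≤ β * P * f)
    (hbatt : 0 < b - ς * C * N * f ^ 2 + ρ) :
    ∀ i : Fin M,
      (∀ x ∈ Set.Icc (0:ℝ) 1,
        Uhat C N f ς P β μ ψ b ρ (B i) x ≤ Uhat C N f ς P β μ ψ b ρ (B i) 0) ∧
      Uhat C N f ς P β μ ψ b ρ (B i) 0 = -(C * N * (β * ς * f ^ 2 + μ / f)) := by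
  intro i
  have hS : 0 ≤ f + β * ς * N * f ^ 3 + μ * N := by positivity
  have hcoeff := offload_coeff_le_of_bandwidth_le (hBpos i) hf hC.le
    ((mul_le_mul_of_nonneg_right (hmax i) hS).trans hcond)
  have hlocal := Uhat_zero_eq_U_zero (ψ := ψ) (B := B i) (P := P) (β := β) (μ := μ) hbatt
  refine ⟨fun x hx => ?_, hlocal.trans (U_zero hC.le hN.le hf.le)⟩
  rw [hlocal]
  exact (Uhat_le_U hψ x).trans (U_le_U_zero hC.le hN.le hf.le hμ hx.1 hcoeff)

theorem stmt_13 (M : ℕ) (hM : 1 ≤ M) (B : Fin M → ℝ) (hBpos : ∀ i, 0 < B i)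
    (istar : Fin M) (hmax : ∀ i, B i ≤ B istar)
    (C N f ς P β μ ψ b ρ : ℝ) (hC : 0 < C) (hN : 0 < N) (hf : 0 < f)
    (hς : 0 < ς) (hP : 0 ≤ P) (hβ : 0 ≤ β) (hμ : 0 ≤ μ) (hψ : 0 ≤ ψ)
    (hcond : B istar * (f + β * ς * N * f ^ 3 + μ * N) ≤ β * P * f)
    (hbatt : 0 < b - ς * C * N * f ^ 2 + ρ) :
    ∀ i : Fin M,
      (∀ x ∈ Set.Icc (0:ℝ) 1,
        Uhat C N f ς P β μ ψ b ρ (B i) x ≤ Uhat C N f ς P β μ ψ b ρ (B i) 0) ∧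
      Uhat C N f ς P β μ ψ b ρ (B i) 0 = -(C * N * (β * ς * f ^ 2 + μ / f)) :=
  stmt_13_general M B hBpos istar hmax C N f ς P β μ ψ b ρ hC hN hf hς hβ hμ hψ hcond hbatt
end

section
/- (Theorem 1, quantized action set.) Let M ≥ 1 and let B_1, …, B_M > 0 with i* achieving B_{i*} = max_{1 ≤ i ≤ M} B_i. Fix reals C > 0, N > 0, f > 0, ς > 0, P ≥ 0, β ≥ 0, μ ≥ 0, and a positive integer N_x. If (μ + β·P)/(β·ς·N·f² + 1) ≤ B_{i*}, then over the finite action set A = {1,…,M} × {l/N_x : l = 0, 1, …, N_x}, the pair (i*, 1) maximizes the deterministic utility: for every i ∈ {1,…,M} and every l ∈ {0,…,N_x}, U_{B_i}(l/N_x) ≤ U_{B_{i*}}(1) = C·(B_{i*} − β·P − μ)/B_{i*}. -/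
section

variable {C N f ς P β μ B x : ℝ}

theorem U_one (hC : 0 ≤ C) (hB : 0 < B) :
    U C N f ς P β μ B 1 = C * (B - β * P - μ) / B := by
  have hmax : max ((1 - 1) * C * N / f) (1 * C / B) = C / B := by
    rw [max_eq_right] <;> simp only [sub_self, zero_mul, zero_div, one_mul]
    positivity
  rw [U, hmax]
  field_simp
  ring

theorem U_mono_bandwidth {B' : ℝ} (hC : 0 ≤ C) (hP : 0 ≤ P) (hβ : 0 ≤ β) (hμ : 0 ≤ μ)
    (hx : 0 ≤ x) (hB : 0 < B) (hBB' : B ≤ B') :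
    U C N f ς P β μ B x ≤ U C N f ς P β μ B' x := by
  have henergy : P * x * C / B' ≤ P * x * C / B :=
    div_le_div_of_nonneg_left (by positivity) hB hBB'
  have hdelay : max ((1 - x) * C * N / f) (x * C / B') ≤
      max ((1 - x) * C * N / f) (x * C / B) :=
    max_le_max le_rfl (div_le_div_of_nonneg_left (by positivity) hB hBB')
  unfold U
  nlinarith [mul_le_mul_of_nonneg_left henergy hβ, mul_le_mul_of_nonneg_left hdelay hμ]

theorem U_le_U_one (hC : 0 ≤ C) (hμ : 0 ≤ μ) (hB : 0 < B) (hx : x ≤ 1)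
    (hcond : μ + β * P ≤ B * (β * ς * N * f ^ 2 + 1)) :
    U C N f ς P β μ B x ≤ U C N f ς P β μ B 1 := by
  have hdelay : x * C / B ≤ max ((1 - x) * C * N / f) (x * C / B) := le_max_right _ _
  have hslope : 0 ≤ (1 - x) * C * (B * (β * ς * N * f ^ 2 + 1) - (μ + β * P)) :=
    mul_nonneg (mul_nonneg (sub_nonneg.mpr hx) hC) (sub_nonneg.mpr hcond)
  have hlinear : x * C - β * (ς * C * N * f ^ 2 * (1 - x) + P * x * C / B) - μ * (x * C / B)
      = U C N f ς P β μ B 1 - (1 - x) * C * (B * (β * ς * N * f ^ 2 + 1) - (μ + β * P)) / B := by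
    rw [U_one hC hB]
    field_simp
    ring
  have hslope' := div_nonneg hslope hB.le
  unfold U at hlinear ⊢
  nlinarith [mul_le_mul_of_nonneg_left hdelay hμ]

end

theorem stmt_14_general (M : ℕ) (B : Fin M → ℝ) (hBpos : ∀ i, 0 < B i)
    (istar : Fin M) (hmax : ∀ i, B i ≤ B istar)
    (C N f ς P β μ : ℝ) (hC : 0 < C) (hN : 0 < N)
    (hς : 0 < ς) (hP : 0 ≤ P) (hβ : 0 ≤ β) (hμ : 0 ≤ μ)
    (Nx : ℕ)
    (hcond : (μ + β * P) / (β * ς * N * f ^ 2 + 1) ≤ B istar) :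
    (∀ i : Fin M, ∀ l : ℕ, l ≤ Nx →
      U C N f ς P β μ (B i) ((l : ℝ) / (Nx : ℝ)) ≤ U C N f ς P β μ (B istar) 1) ∧
    U C N f ς P β μ (B istar) 1 = C * (B istar - β * P - μ) / B istar := by
  have hcond' : μ + β * P ≤ B istar * (β * ς * N * f ^ 2 + 1) :=
    (div_le_iff₀ (by positivity)).mp hcond
  refine ⟨fun i l hl => ?_, U_one hC.le (hBpos istar)⟩
  have hx1 : (l : ℝ) / Nx ≤ 1 := div_le_one_of_le₀ (by exact_mod_cast hl) (Nat.cast_nonneg _)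
  calc U C N f ς P β μ (B i) ((l : ℝ) / Nx)
      ≤ U C N f ς P β μ (B istar) ((l : ℝ) / Nx) :=
        U_mono_bandwidth hC.le hP hβ hμ (by positivity) (hBpos i) (hmax i)
    _ ≤ U C N f ς P β μ (B istar) 1 := U_le_U_one hC.le hμ (hBpos istar) hx1 hcond'

theorem stmt_14 (M : ℕ) (hM : 1 ≤ M) (B : Fin M → ℝ) (hBpos : ∀ i, 0 < B i)
    (istar : Fin M) (hmax : ∀ i, B i ≤ B istar)
    (C N f ς P β μ : ℝ) (hC : 0 < C) (hN : 0 < N) (hf : 0 < f)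
    (hς : 0 < ς) (hP : 0 ≤ P) (hβ : 0 ≤ β) (hμ : 0 ≤ μ)
    (Nx : ℕ) (hNx : 0 < Nx)
    (hcond : (μ + β * P) / (β * ς * N * f ^ 2 + 1) ≤ B istar) :
    (∀ i : Fin M, ∀ l : ℕ, l ≤ Nx →
      U C N f ς P β μ (B i) ((l : ℝ) / (Nx : ℝ)) ≤ U C N f ς P β μ (B istar) 1) ∧
    U C N f ς P β μ (B istar) 1 = C * (B istar - β * P - μ) / B istar :=
  stmt_14_general M B hBpos istar hmax C N f ς P β μ hC hN hς hP hβ hμ Nx hcond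
end
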